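/- If the product BC of infinite matrices B and C is defined and A is a row finite infinite matrix, then AB, A(BC), and (AB)C are all defined and A(BC) = (AB)C. -/

import Mathlib

open Set

def ProdDef {F : Type*} [Field F] (A B : ℕ → ℕ → F) : Prop :=
  ∀ i k, {j | A i j * B j k ≠ 0}.Finite

noncomputable def mmul {F : Type*} [Field F] (A B : ℕ → ℕ → F) : ℕ → ℕ → F :=
  fun i k => ∑ᶠ j, A i j * B j k

def RowFin {F : Type*} [Field F] (A : ℕ → ℕ → F) : Prop := ∀ i, {j | A i j ≠ 0}.Finite

def ColFin {F : Type*} [Field F] (A : ℕ → ℕ → F) : Prop := ∀ j, {i | A i j ≠ 0}.Finite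

/-- A family of vectors `V j`, summable iff each coordinate has finite support over `j`. -/
def Summab {F : Type*} [Field F] (V : ℕ → ℕ → F) : Prop := ∀ i, {j | V j i ≠ 0}.Finite

/-- Condition (D): the family of rank-one matrices `A_{*j} b_{jk} C_{k*}` is summable. -/
def CondD {F : Type*} [Field F] (A B C : ℕ → ℕ → F) : Prop :=
  ∀ i l, {p : ℕ × ℕ | A i p.1 * B p.1 p.2 * C p.2 l ≠ 0}.Finite

/-! Since `A` is row finite and `BC` is defined, for each `(i, l)` only finitely many pairs
`(j, k)` have `a_ij b_jk c_kl ≠ 0` (condition (D)). Both `(A(BC))_il` and `((AB)C)_il` are then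
iterated sums of this finitely supported double family, taken in the two orders. -/

theorem finsum_comm_of_finite_support {α β M : Type*} [AddCommMonoid M] (f : α → β → M)
    (hf : (Function.support (Function.uncurry f)).Finite) :
    ∑ᶠ a, ∑ᶠ b, f a b = ∑ᶠ b, ∑ᶠ a, f a b := by
  have hf_swap : (Function.support (Function.uncurry f ∘ Prod.swap)).Finite :=
    hf.preimage Prod.swap_injective.injOn
  calc ∑ᶠ a, ∑ᶠ b, f a b = ∑ᶠ p : α × β, Function.uncurry f p := (finsum_curry _ hf).symm
    _ = ∑ᶠ p : β × α, Function.uncurry f p.swap :=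
        (finsum_comp_equiv (Equiv.prodComm β α)).symm
    _ = ∑ᶠ b, ∑ᶠ a, f a b := finsum_curry _ hf_swap

section InfiniteMatrix

variable {F : Type*} [Field F]

theorem RowFin.prodDef {A : ℕ → ℕ → F} (hA : RowFin A) (B : ℕ → ℕ → F) : ProdDef A B :=
  fun i _ => (hA i).subset fun _ hj hA0 => hj (by rw [hA0, zero_mul])

theorem RowFin.condD {A B C : ℕ → ℕ → F} (hA : RowFin A) (hBC : ProdDef B C) : CondD A B C := by
  intro i l
  refine ((hA i).biUnion fun j _ => (hBC j l).image fun k => (j, k)).subset ?_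
  rintro ⟨j, k⟩ hjk
  have hAij : A i j ≠ 0 := fun h => hjk (by rw [h, zero_mul, zero_mul])
  have hBCjk : B j k * C k l ≠ 0 := fun h => hjk (by rw [mul_assoc, h, mul_zero])
  exact mem_biUnion hAij ⟨k, hBCjk, rfl⟩

theorem CondD.prodDef_mmul_left {A B C : ℕ → ℕ → F} (hD : CondD A B C) :
    ProdDef (mmul A B) C := by
  intro i l
  refine ((hD i l).image Prod.snd).subset fun k hk => ?_
  obtain ⟨j, hj⟩ : ∃ j, A i j * B j k * C k l ≠ 0 := by
    contrapose! hk
    simp only [mem_ofPred_eq, not_not, mmul, finsum_mul]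
    exact finsum_eq_zero_of_forall_eq_zero hk
  exact ⟨(j, k), hj, rfl⟩

theorem CondD.mmul_assoc {A B C : ℕ → ℕ → F} (hD : CondD A B C) :
    mmul A (mmul B C) = mmul (mmul A B) C := by
  funext i l
  have hfin : (Function.support (Function.uncurry fun j k => A i j * (B j k * C k l))).Finite :=
    (hD i l).subset fun p (hp : A i p.1 * (B p.1 p.2 * C p.2 l) ≠ 0) => by
      rwa [← mul_assoc] at hp
  calc mmul A (mmul B C) i l = ∑ᶠ j, ∑ᶠ k, A i j * (B j k * C k l) := by
        simp only [mmul, mul_finsum]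
    _ = ∑ᶠ k, ∑ᶠ j, A i j * (B j k * C k l) := finsum_comm_of_finite_support _ hfin
    _ = mmul (mmul A B) C i l := by
        simp only [mmul, finsum_mul, mul_assoc]

end InfiniteMatrix

theorem stmt18 {F : Type*} [Field F] (A B C : ℕ → ℕ → F)
    (hBC : ProdDef B C) (hA : RowFin A) :
    ProdDef A B ∧ ProdDef A (mmul B C) ∧ ProdDef (mmul A B) C ∧
      mmul A (mmul B C) = mmul (mmul A B) C := by
  have hD : CondD A B C := hA.condD hBC
  exact ⟨hA.prodDef B, hA.prodDef (mmul B C), hD.prodDef_mmul_left, hD.mmul_assoc⟩
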